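/- Let n ≥ 1 be an integer and r < 0 a real number. The set L_r of all real (n+2)×(n+2) block matrices (block sizes 1, n, 1) of the form [[0, rXᵗ, 0],[X, A, −rX],[0, −Xᵗ, 0]] with X ∈ ℝⁿ (a column vector) and A ∈ so(n) is a Lie subalgebra of M_{n+2}(ℝ) under the commutator, and L_r is isomorphic as a real Lie algebra to so(n+1). -/

import Mathlib

/-!
Put `t = 1 / √(-2r)`, so that `2 r t² = -1`. For the `(n+2) × (n+1)` matrix
`P = [[0, -rt], [I, 0], [0, t]]` and the `(n+1) × (n+2)` matrix `Q = [[0, I, 0], [t, 0, -rt]]`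
one has `Q P = 1`, so `N ↦ P N Q` is linear, injective and multiplicative, hence an injective
Lie algebra map `gl(n+1) → gl(n+2)`. It sends `[[A, X], [-Xᵗ, 0]] ∈ so(n+1)` to
`[[0, r(tX)ᵗ, 0], [tX, A, -r(tX)], [0, -(tX)ᵗ, 0]]`, so `L_r` is the image of `so(n+1)`.
-/

open Matrix

attribute [local instance 100] LieRing.ofAssociativeRing

/-- The block matrix (block sizes `1, n, 1`)
`[[0, rXᵗ, 0],[X, A, −rX],[0, −Xᵗ, 0]]` with `X ∈ ℝⁿ`, `A ∈ M_n(ℝ)`. -/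
def Lmat {n : ℕ} (r : ℝ) (X : Fin n → ℝ) (A : Matrix (Fin n) (Fin n) ℝ) :
    Matrix ((Fin 1 ⊕ Fin n) ⊕ Fin 1) ((Fin 1 ⊕ Fin n) ⊕ Fin 1) ℝ :=
  fromBlocks
    (fromBlocks 0 (Matrix.of fun _ j => r * X j) (Matrix.of fun i _ => X i) A)
    (Matrix.of fun i _ => Sum.elim (fun _ => (0 : ℝ)) (fun i' => -r * X i') i)
    (Matrix.of fun _ j => Sum.elim (fun _ => (0 : ℝ)) (fun j' => -X j') j)
    0

namespace Matrix

section Compression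

variable {R m n : Type*} [CommRing R] [Fintype m] [DecidableEq m] [Fintype n] [DecidableEq n]

def compressLieHom (P : Matrix m n R) (Q : Matrix n m R) (h : Q * P = 1) :
    Matrix n n R →ₗ⁅R⁆ Matrix m m R where
  toFun N := P * N * Q
  map_add' N N' := by simp only [Matrix.mul_add, Matrix.add_mul]
  map_smul' c N := by simp
  map_lie' {N N'} := by
    have hmul (N N' : Matrix n n R) : P * N * Q * (P * N' * Q) = P * (N * N') * Q := by
      simp only [Matrix.mul_assoc, ← Matrix.mul_assoc Q, h, Matrix.one_mul]
    simp only [Ring.lie_def, hmul, ← Matrix.sub_mul, ← Matrix.mul_sub]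

@[simp]
theorem compressLieHom_apply (P : Matrix m n R) (Q : Matrix n m R) (h : Q * P = 1)
    (N : Matrix n n R) : compressLieHom P Q h N = P * N * Q := rfl

theorem compressLieHom_injective (P : Matrix m n R) (Q : Matrix n m R) (h : Q * P = 1) :
    Function.Injective (compressLieHom P Q h) := by
  refine Function.LeftInverse.injective (g := fun M => Q * M * P) fun N => ?_
  show Q * (P * N * Q) * P = N
  rw [← Matrix.mul_assoc, ← Matrix.mul_assoc, h, Matrix.one_mul,
    Matrix.mul_assoc, h, Matrix.mul_one]

end Compression

section SkewBlock

variable {R ι : Type*} [CommRing R]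

def skewBlock (X : ι → R) (A : Matrix ι ι R) : Matrix (ι ⊕ Fin 1) (ι ⊕ Fin 1) R :=
  fromBlocks A (replicateCol (Fin 1) X) (-replicateRow (Fin 1) X) 0

theorem transpose_skewBlock {X : ι → R} {A : Matrix ι ι R} (hA : Aᵀ = -A) :
    (skewBlock X A)ᵀ = -skewBlock X A := by
  simp [skewBlock, fromBlocks_transpose, hA, fromBlocks_neg]

theorem exists_eq_skewBlock [IsAddTorsionFree R] {M : Matrix (ι ⊕ Fin 1) (ι ⊕ Fin 1) R}
    (hM : Mᵀ = -M) :
    ∃ X A, Aᵀ = -A ∧ M = skewBlock X A := by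
  have hM' (i j) : M i j = -M j i := by simpa using congrFun (congrFun hM j) i
  refine ⟨fun i => M (.inl i) (.inr 0), M.toBlocks₁₁, ?_, ?_⟩
  · ext i j; simp [toBlocks₁₁, hM' (.inl i) (.inl j)]
  · rw [← fromBlocks_toBlocks M, skewBlock]
    congr 1 <;> ext i j
    · simp [toBlocks₁₂, Subsingleton.elim j 0]
    · simp [toBlocks₂₁, toBlocks₁₂, Subsingleton.elim i 0, hM' (.inr 0) (.inl j)]
    · simpa [toBlocks₂₂, Subsingleton.elim i 0, Subsingleton.elim j 0, self_eq_neg]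
        using hM' (.inr 0) (.inr 0)

end SkewBlock

end Matrix

def lmatLeft (n : ℕ) (r t : ℝ) : Matrix ((Fin 1 ⊕ Fin n) ⊕ Fin 1) (Fin n ⊕ Fin 1) ℝ :=
  fromBlocks (fromRows 0 1) (fromRows ((-r * t) • 1) 0) 0 (t • 1)

def lmatRight (n : ℕ) (r t : ℝ) : Matrix (Fin n ⊕ Fin 1) ((Fin 1 ⊕ Fin n) ⊕ Fin 1) ℝ :=
  fromBlocks (fromCols 0 1) 0 (fromCols (t • 1) 0) ((-r * t) • 1)

theorem lmatRight_mul_lmatLeft {n : ℕ} {r t : ℝ} (h : 2 * r * t ^ 2 = -1) :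
    lmatRight n r t * lmatLeft n r t = 1 := by
  simp only [lmatRight, lmatLeft, fromBlocks_multiply, fromCols_mul_fromRows, Matrix.zero_mul,
    Matrix.mul_zero, Matrix.mul_one, add_zero, zero_add, smul_mul_smul, ← add_smul]
  rw [show t * (-r * t) + -r * t * t = 1 by linear_combination -h, one_smul, fromBlocks_one]

theorem lmatLeft_mul_skewBlock_mul_lmatRight (n : ℕ) (r t : ℝ) (X : Fin n → ℝ)
    (A : Matrix (Fin n) (Fin n) ℝ) :
    lmatLeft n r t * skewBlock X A * lmatRight n r t = Lmat r (t • X) A := by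
  ext ((i|i)|i) ((j|j)|j) <;>
    simp [lmatLeft, lmatRight, skewBlock, Lmat, Matrix.mul_apply, Fintype.sum_sum_type,
      one_apply, Fin.fin_one_eq_zero, mul_comm, mul_left_comm]

def lmatLieHom (n : ℕ) {r t : ℝ} (h : 2 * r * t ^ 2 = -1) :
    skewAdjointMatricesLieSubalgebra (1 : Matrix (Fin (n + 1)) (Fin (n + 1)) ℝ) →ₗ⁅ℝ⁆
      Matrix ((Fin 1 ⊕ Fin n) ⊕ Fin 1) ((Fin 1 ⊕ Fin n) ⊕ Fin 1) ℝ :=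
  (compressLieHom (lmatLeft n r t) (lmatRight n r t) (lmatRight_mul_lmatLeft h)).comp
    ((reindexLieEquiv finSumFinEquiv.symm).toLieHom.comp
      (skewAdjointMatricesLieSubalgebra 1).incl)

theorem lmatLieHom_injective (n : ℕ) {r t : ℝ} (h : 2 * r * t ^ 2 = -1) :
    Function.Injective (lmatLieHom n h) :=
  (compressLieHom_injective _ _ (lmatRight_mul_lmatLeft h)).comp
    ((reindexLieEquiv finSumFinEquiv.symm).injective.comp Subtype.val_injective)

theorem range_lmatLieHom (n : ℕ) {r t : ℝ} (h : 2 * r * t ^ 2 = -1) :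
    Set.range (lmatLieHom n h) =
      {M | ∃ (X : Fin n → ℝ) (A : Matrix (Fin n) (Fin n) ℝ), Aᵀ = -A ∧ M = Lmat r X A} := by
  have ht : t ≠ 0 := by rintro rfl; norm_num at h
  ext M
  constructor
  · rintro ⟨⟨N, hN⟩, rfl⟩
    have hN' : (reindex finSumFinEquiv.symm finSumFinEquiv.symm N)ᵀ =
        -reindex finSumFinEquiv.symm finSumFinEquiv.symm N := by
      rw [transpose_reindex, (LieAlgebra.Orthogonal.mem_so _ _ _).1 hN]; rfl
    obtain ⟨X, A, hA, hXA⟩ := exists_eq_skewBlock hN'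
    refine ⟨t • X, A, hA, ?_⟩
    rw [← lmatLeft_mul_skewBlock_mul_lmatRight, ← hXA]
    rfl
  · rintro ⟨X, A, hA, rfl⟩
    refine ⟨⟨reindex finSumFinEquiv finSumFinEquiv (skewBlock (t⁻¹ • X) A), ?_⟩, ?_⟩
    · refine (LieAlgebra.Orthogonal.mem_so _ _ _).2 ?_
      rw [transpose_reindex, transpose_skewBlock hA]; rfl
    · simp [lmatLieHom, lmatLeft_mul_skewBlock_mul_lmatRight, smul_smul, mul_inv_cancel₀ ht]

theorem Lmat_lie_subalgebra_iso_so (n : ℕ) (r : ℝ) (hr : r < 0) :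
    ∃ S : LieSubalgebra ℝ (Matrix ((Fin 1 ⊕ Fin n) ⊕ Fin 1) ((Fin 1 ⊕ Fin n) ⊕ Fin 1) ℝ),
      (S : Set (Matrix ((Fin 1 ⊕ Fin n) ⊕ Fin 1) ((Fin 1 ⊕ Fin n) ⊕ Fin 1) ℝ)) =
        {M | ∃ (X : Fin n → ℝ) (A : Matrix (Fin n) (Fin n) ℝ), Aᵀ = -A ∧ M = Lmat r X A} ∧
      Nonempty
        (S ≃ₗ⁅ℝ⁆ skewAdjointMatricesLieSubalgebra (1 : Matrix (Fin (n+1)) (Fin (n+1)) ℝ)) := by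
  have h : 2 * r * (√(-(2 * r)))⁻¹ ^ 2 = -1 := by
    rw [inv_pow, Real.sq_sqrt (by linarith)]
    field_simp [hr.ne]
  exact ⟨(lmatLieHom n h).range, by rw [LieHom.coe_range, range_lmatLieHom],
    ⟨((lmatLieHom n h).equivRangeOfInjective (lmatLieHom_injective n h)).symm⟩⟩
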